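/- For every real t > 0, ∫_{Δ₁} (∂F₁/∂x)(x,p) dx dp = ∫₀¹ dx/(2(x+2t)^{3/2}(2−x)^{1/2}), where F₁(x,p) = −x^{1/2}(1−x)^{1/2}/(4(x+2t)^{3/2} p^{3/4}(1−p)^{1/2}) and ∂F₁/∂x denotes the partial derivative of F₁ with respect to x; all fractional powers are the positive real ones. -/

import Mathlib

/-!
On `Δ₁` the integrand factors as `F₁(x,p) = f(x) / w(p)` with `w(p) = p^{3/4}(1-p)^{1/2}`, and
`f'` has only `x^{-1/2}` and `(1-x)^{-1/2}` singularities, so `f'(x)/w(p)` is integrable on the unit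
square and Fubini applies with the `x`-integral inside. The section of `Δ₁` at height `p` is
`[2√p/(1+√p), 1)`, so the inner integral is `-f(2√p/(1+√p))/w(p) = 1/(8√p B^{3/2})` with
`B = (1+t)√p + t`. Both this function of `p` and the right-hand integrand have explicit
antiderivatives, and both integrals equal `(t^{-1/2} - (1+2t)^{-1/2}) / (2(1+t))`.
-/

open MeasureTheory Set

def Delta1 : Set (ℝ × ℝ) :=
  {z | 0 < z.1 ∧ z.1 < 1 ∧ 0 < z.2 ∧ z.2 ≤ (z.1 / (2 - z.1)) ^ 2}

section Fubini

variable {α β E : Type*} [MeasurableSpace α] [MeasurableSpace β] {μ : Measure α} {ν : Measure β}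
  [NormedAddCommGroup E] [NormedSpace ℝ E]

theorem setIntegral_prod_eq_integral_setIntegral_section [SFinite μ] [SFinite ν]
    {S : Set (α × β)} (hS : MeasurableSet S) {F : α × β → E} (hF : IntegrableOn F S (μ.prod ν)) :
    ∫ z in S, F z ∂μ.prod ν = ∫ y, ∫ x in {x | (x, y) ∈ S}, F (x, y) ∂μ ∂ν := by
  rw [← integral_indicator hS, integral_prod_symm _ ((integrable_indicator_iff hS).2 hF)]
  congr 1 with y
  exact integral_indicator (measurable_prodMk_right hS)

theorem MeasureTheory.IntegrableOn.mul_prod [SFinite μ] [SFinite ν] {L : Type*} [NormedRing L]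
    {u : α → L} {v : β → L} {A : Set α} {B : Set β}
    (hu : IntegrableOn u A μ) (hv : IntegrableOn v B ν) :
    IntegrableOn (fun z => u z.1 * v z.2) (A ×ˢ B) (μ.prod ν) := by
  rw [IntegrableOn, ← Measure.prod_restrict]
  exact Integrable.mul_prod hu hv

end Fubini

theorem integral_Ioo_eq_sub_of_hasDerivAt {f f' : ℝ → ℝ} {a b : ℝ} (hab : a ≤ b)
    (hf : ContinuousOn f (Icc a b)) (hderiv : ∀ x ∈ Ioo a b, HasDerivAt f (f' x) x)
    (hint : IntegrableOn f' (Ioo a b)) :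
    ∫ x in Ioo a b, f' x = f b - f a := by
  rw [← integral_Ioc_eq_integral_Ioo, ← intervalIntegral.integral_of_le hab,
    intervalIntegral.integral_eq_sub_of_hasDerivAt_of_le hab hf hderiv
      ((intervalIntegrable_iff_integrableOn_Ioo_of_le hab).2 hint)]

theorem integral_Ioo_eq_sub_of_hasDerivAt_of_nonneg {f f' : ℝ → ℝ} {a b : ℝ} (hab : a ≤ b)
    (hf : ContinuousOn f (Icc a b)) (hderiv : ∀ x ∈ Ioo a b, HasDerivAt f (f' x) x)
    (hnonneg : ∀ x ∈ Ioo a b, 0 ≤ f' x) :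
    ∫ x in Ioo a b, f' x = f b - f a :=
  integral_Ioo_eq_sub_of_hasDerivAt hab hf hderiv <| by
    rw [← integrableOn_Ioc_iff_integrableOn_Ioo]
    exact intervalIntegral.integrableOn_deriv_of_nonneg hf hderiv hnonneg

theorem integrableOn_Icc_rpow {r : ℝ} (hr : -1 < r) :
    IntegrableOn (fun x : ℝ => x ^ r) (Icc 0 1) := by
  rw [integrableOn_Icc_iff_integrableOn_Ioo]
  exact (intervalIntegral.integrableOn_Ioo_rpow_iff one_pos).2 hr

theorem integrableOn_Icc_one_sub_rpow {r : ℝ} (hr : -1 < r) :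
    IntegrableOn (fun x : ℝ => (1 - x) ^ r) (Icc 0 1) := by
  have := ((intervalIntegral.intervalIntegrable_rpow' (a := 0) (b := 1) hr).comp_sub_left 1).symm
  simp only [sub_zero, sub_self] at this
  rw [integrableOn_Icc_iff_integrableOn_Ioc]
  exact this.1

theorem integrableOn_rpow_mul_one_sub_rpow {r s : ℝ} (hr : -1 < r) (hs : -1 < s) :
    IntegrableOn (fun x : ℝ => x ^ r * (1 - x) ^ s) (Ioo 0 1) := by
  refine IntegrableOn.mono_set ?_
    (Ioo_subset_Icc_self.trans (Icc_subset_Icc_union_Icc (b := 1/2)))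
  refine IntegrableOn.union ?_ ?_
  · refine ((integrableOn_Icc_rpow hr).mono_set
      (Icc_subset_Icc_right (by norm_num))).mul_continuousOn ?_ isCompact_Icc
    exact (continuousOn_const.sub continuousOn_id).rpow_const fun x hx =>
      Or.inl (ne_of_gt (show (0:ℝ) < 1 - x by linarith [hx.2]))
  · refine ((integrableOn_Icc_one_sub_rpow hs).mono_set
      (Icc_subset_Icc_left (by norm_num))).continuousOn_mul ?_ isCompact_Icc
    exact continuousOn_id.rpow_const fun x hx =>
      Or.inl (ne_of_gt (show (0:ℝ) < x by linarith [hx.1]))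

theorem Real.rpow_three_halves {x : ℝ} (hx : 0 ≤ x) : x ^ ((3:ℝ)/2) = √x ^ 3 := by
  rw [Real.sqrt_eq_rpow, ← Real.rpow_mul_natCast hx]
  norm_num

theorem Real.rpow_sq {x : ℝ} (hx : 0 ≤ x) (r : ℝ) : (x ^ r) ^ 2 = x ^ (r * 2) := by
  rw [← Real.rpow_mul_natCast hx]
  norm_num

noncomputable def xFactor (t x : ℝ) : ℝ :=
  -(x ^ ((1:ℝ)/2) * (1 - x) ^ ((1:ℝ)/2)) / (4 * (x + 2 * t) ^ ((3:ℝ)/2))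

-- Written so that the integrable singularities `x^{-1/2}` and `(1-x)^{-1/2}` appear as factors.
noncomputable def xFactorDeriv (t x : ℝ) : ℝ :=
  x ^ (-(1:ℝ)/2) * (-(1 - x) ^ ((1:ℝ)/2) / (8 * (x + 2 * t) ^ ((3:ℝ)/2)))
    + (1 - x) ^ (-(1:ℝ)/2) * (x ^ ((1:ℝ)/2) / (8 * (x + 2 * t) ^ ((3:ℝ)/2)))
    + 3 * x ^ ((1:ℝ)/2) * (1 - x) ^ ((1:ℝ)/2) * (x + 2 * t) ^ ((1:ℝ)/2)
      / (8 * ((x + 2 * t) ^ ((3:ℝ)/2)) ^ 2)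

noncomputable def pFactor (p : ℝ) : ℝ := p ^ ((3:ℝ)/4) * (1 - p) ^ ((1:ℝ)/2)

theorem F₁_eq_xFactor_div_pFactor (t x p : ℝ) :
    -(x ^ ((1:ℝ)/2) * (1 - x) ^ ((1:ℝ)/2)) /
      (4 * (x + 2 * t) ^ ((3:ℝ)/2) * p ^ ((3:ℝ)/4) * (1 - p) ^ ((1:ℝ)/2))
    = xFactor t x / pFactor p := by
  rw [xFactor, pFactor]
  ring

theorem hasDerivAt_xFactor {t x : ℝ} (ht : 0 ≤ t) (hx0 : 0 < x) (hx1 : x < 1) :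
    HasDerivAt (xFactor t) (xFactorDeriv t x) x := by
  have hxt : 0 < x + 2 * t := by linarith
  have ha := (hasDerivAt_id x).rpow_const (p := (1:ℝ)/2) (Or.inl hx0.ne')
  have hb := ((hasDerivAt_id x).const_sub 1).rpow_const (p := (1:ℝ)/2)
    (Or.inl (sub_pos.2 hx1).ne')
  have hc := (((hasDerivAt_id x).add_const (2 * t)).rpow_const (p := (3:ℝ)/2)
    (Or.inr (by norm_num))).const_mul 4
  refine ((ha.mul hb).neg.div hc (by positivity)).congr_deriv ?_
  simp only [id, Pi.neg_apply, Pi.mul_apply, xFactorDeriv,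
    show (1:ℝ)/2 - 1 = -(1:ℝ)/2 by norm_num, show (3:ℝ)/2 - 1 = (1:ℝ)/2 by norm_num]
  have : 0 < (x + 2 * t) ^ ((3:ℝ)/2) := by positivity
  field_simp
  ring

theorem continuousOn_xFactor {t : ℝ} (ht : 0 < t) : ContinuousOn (xFactor t) (Icc 0 1) := by
  have hden : ∀ x ∈ Icc (0:ℝ) 1, 4 * (x + 2 * t) ^ ((3:ℝ)/2) ≠ 0 := fun x hx =>
    (mul_pos (by norm_num) (Real.rpow_pos_of_pos (by linarith [hx.1]) _)).ne'
  unfold xFactor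
  fun_prop (disch := first | norm_num | exact hden)

theorem integrableOn_xFactorDeriv {t : ℝ} (ht : 0 < t) :
    IntegrableOn (xFactorDeriv t) (Ioo 0 1) := by
  have hden : ∀ x ∈ Icc (0:ℝ) 1, 8 * (x + 2 * t) ^ ((3:ℝ)/2) ≠ 0 := fun x hx =>
    (mul_pos (by norm_num) (Real.rpow_pos_of_pos (by linarith [hx.1]) _)).ne'
  have hden2 : ∀ x ∈ Icc (0:ℝ) 1, 8 * ((x + 2 * t) ^ ((3:ℝ)/2)) ^ 2 ≠ 0 := fun x hx =>
    (mul_pos (by norm_num) (pow_pos (Real.rpow_pos_of_pos (by linarith [hx.1]) _) 2)).ne'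
  refine IntegrableOn.mono_set ?_ Ioo_subset_Icc_self
  refine ((IntegrableOn.add ?_ ?_).add ?_)
  · exact (integrableOn_Icc_rpow (by norm_num)).mul_continuousOn
      (by fun_prop (disch := first | norm_num | exact hden)) isCompact_Icc
  · exact (integrableOn_Icc_one_sub_rpow (by norm_num)).mul_continuousOn
      (by fun_prop (disch := first | norm_num | exact hden)) isCompact_Icc
  · exact ContinuousOn.integrableOn_Icc (by fun_prop (disch := first | norm_num | exact hden2))

theorem xFactor_sq {t x : ℝ} (ht : 0 ≤ t) (hx0 : 0 ≤ x) (hx1 : x ≤ 1) :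
    xFactor t x ^ 2 = x * (1 - x) / (16 * (x + 2 * t) ^ 3) := by
  rw [xFactor, div_pow, neg_sq, mul_pow, mul_pow, Real.rpow_sq hx0, Real.rpow_sq (by linarith),
    Real.rpow_sq (by linarith)]
  norm_num

theorem pFactor_sq {p : ℝ} (hp0 : 0 ≤ p) (hp1 : p ≤ 1) : pFactor p ^ 2 = √p ^ 3 * (1 - p) := by
  rw [pFactor, mul_pow, Real.rpow_sq hp0, Real.rpow_sq (by linarith), ← Real.rpow_three_halves hp0]
  norm_num

theorem integrableOn_inv_pFactor : IntegrableOn (fun p => (pFactor p)⁻¹) (Ioo 0 1) := by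
  refine (integrableOn_rpow_mul_one_sub_rpow (r := -(3/4)) (s := -(1/2)) (by norm_num)
    (by norm_num)).congr_fun (fun p hp => ?_) measurableSet_Ioo
  dsimp only
  rw [pFactor, mul_inv, Real.rpow_neg hp.1.le, Real.rpow_neg (sub_pos.2 hp.2).le]

theorem measurableSet_Delta1 : MeasurableSet Delta1 := by
  unfold Delta1
  measurability

theorem Delta1_subset : Delta1 ⊆ Ioo 0 1 ×ˢ Ioo 0 1 := by
  rintro ⟨x, p⟩ ⟨hx0, hx1, hp0, hp⟩
  have hq : x / (2 - x) < 1 := (div_lt_one (by linarith)).2 (by linarith)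
  exact ⟨⟨hx0, hx1⟩, hp0,
    hp.trans_lt (pow_lt_one₀ (div_nonneg hx0.le (by linarith)) hq two_ne_zero)⟩

noncomputable def lowerEnd (p : ℝ) : ℝ := 2 * √p / (1 + √p)

theorem lowerEnd_pos {p : ℝ} (hp : 0 < p) : 0 < lowerEnd p := by
  have := Real.sqrt_pos.2 hp
  unfold lowerEnd
  positivity

theorem lowerEnd_lt_one {p : ℝ} (hp : p < 1) : lowerEnd p < 1 := by
  have : √p < 1 := (Real.sqrt_lt' one_pos).2 (by simpa using hp)
  rw [lowerEnd, div_lt_one (by positivity)]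
  linarith

theorem lowerEnd_le_iff {p x : ℝ} (hx0 : 0 ≤ x) (hx2 : x < 2) :
    lowerEnd p ≤ x ↔ p ≤ (x / (2 - x)) ^ 2 := by
  have h2x : 0 < 2 - x := by linarith
  rw [← Real.sqrt_le_left (by positivity), le_div_iff₀ h2x, lowerEnd,
    div_le_iff₀ (by positivity)]
  constructor <;> intro h <;> linarith

theorem setOf_mem_Delta1 {p : ℝ} (hp : 0 < p) :
    {x | (x, p) ∈ Delta1} = Ico (lowerEnd p) 1 := by
  ext x
  simp only [Delta1, mem_ofPred_eq, mem_Ico]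
  constructor
  · rintro ⟨hx0, hx1, -, h⟩
    exact ⟨(lowerEnd_le_iff hx0.le (by linarith)).2 h, hx1⟩
  · rintro ⟨h, hx1⟩
    have hx0 := (lowerEnd_pos hp).trans_le h
    exact ⟨hx0, hx1, hp, (lowerEnd_le_iff hx0.le (by linarith)).1 h⟩

noncomputable def innerIntegral (t p : ℝ) : ℝ :=
  1 / (8 * √p * ((1 + t) * √p + t) * √((1 + t) * √p + t))

theorem neg_xFactor_lowerEnd_div_pFactor {t p : ℝ} (ht : 0 ≤ t) (hp0 : 0 < p) (hp1 : p < 1) :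
    -xFactor t (lowerEnd p) / pFactor p = innerIntegral t p := by
  -- Both sides are nonnegative and their squares are rational functions of `√p`.
  have hx0 := lowerEnd_pos hp0
  have hx1 := lowerEnd_lt_one hp1
  have hxF : 0 ≤ -xFactor t (lowerEnd p) := by
    rw [xFactor, neg_div, neg_neg]
    positivity
  have hs : 0 < √p := Real.sqrt_pos.2 hp0
  have hs1 : √p < 1 := (Real.sqrt_lt' one_pos).2 (by simpa using hp1)
  have hsq : √p ^ 2 = p := Real.sq_sqrt hp0.le
  have hB : 0 < (1 + t) * √p + t := by positivity
  rw [← sq_eq_sq₀ (div_nonneg hxF (by unfold pFactor; positivity))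
      (by unfold innerIntegral; positivity),
    div_pow, neg_sq, xFactor_sq ht hx0.le hx1.le, pFactor_sq hp0.le hp1.le, innerIntegral,
    div_pow, mul_pow, mul_pow, Real.sq_sqrt hB.le, lowerEnd]
  set s := √p
  rw [← hsq]
  have : 1 - s ^ 2 ≠ 0 := by nlinarith
  field_simp
  ring

theorem integral_innerIntegral {t : ℝ} (ht : 0 < t) :
    ∫ p in Ioo 0 1, innerIntegral t p = (1 / √t - 1 / √(1 + 2 * t)) / (2 * (1 + t)) := by
  have hB : ∀ p : ℝ, 0 < (1 + t) * √p + t := fun p => by positivity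
  have hden : ∀ p ∈ Icc (0:ℝ) 1, 2 * (1 + t) * √((1 + t) * √p + t) ≠ 0 := fun p _ => by
    have := Real.sqrt_pos.2 (hB p)
    positivity
  rw [integral_Ioo_eq_sub_of_hasDerivAt_of_nonneg
    (f := fun p => -1 / (2 * (1 + t) * √((1 + t) * √p + t))) zero_le_one
    (by fun_prop (disch := exact hden)) (fun p hp => ?_)
    (fun p hp => by unfold innerIntegral; positivity)]
  · rw [Real.sqrt_one, Real.sqrt_zero, show (1 + t) * 1 + t = 1 + 2 * t by ring,
      show (1 + t) * 0 + t = t by ring]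
    have := Real.sqrt_pos.2 ht
    have := Real.sqrt_pos.2 (show (0:ℝ) < 1 + 2 * t by positivity)
    field_simp
    ring
  · have hs : 0 < √p := Real.sqrt_pos.2 hp.1
    have hsB : 0 < √((1 + t) * √p + t) := Real.sqrt_pos.2 (hB p)
    have h := ((((Real.hasDerivAt_sqrt hp.1.ne').const_mul (1 + t)).add_const t).sqrt
      (hB p).ne').const_mul (2 * (1 + t))
    refine ((hasDerivAt_const p (-1 : ℝ)).div h (by positivity)).congr_deriv ?_
    rw [innerIntegral]
    field_simp
    rw [Real.sq_sqrt (hB p).le]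
    ring

theorem integral_rhs {t : ℝ} (ht : 0 < t) :
    ∫ x in Ioo 0 1, 1 / (2 * (x + 2 * t) ^ ((3:ℝ)/2) * (2 - x) ^ ((1:ℝ)/2))
      = (1 / √t - 1 / √(1 + 2 * t)) / (2 * (1 + t)) := by
  have hG : ∀ x ∈ Icc (0:ℝ) 1, 2 * (1 + t) * √(x + 2 * t) ≠ 0 := fun x hx => by
    have := Real.sqrt_pos.2 (show 0 < x + 2 * t by linarith [hx.1])
    positivity
  rw [setIntegral_congr_fun measurableSet_Ioo
      (g := fun x => 1 / (2 * √(x + 2 * t) ^ 3 * √(2 - x)))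
      fun x hx => by rw [Real.rpow_three_halves (by linarith [hx.1]), ← Real.sqrt_eq_rpow],
    integral_Ioo_eq_sub_of_hasDerivAt_of_nonneg
      (f := fun x => -√(2 - x) / (2 * (1 + t) * √(x + 2 * t))) zero_le_one
      (by fun_prop (disch := exact hG)) (fun x hx => ?_) (fun x hx => by positivity)]
  · rw [show (2:ℝ) - 1 = 1 by norm_num, Real.sqrt_one, sub_zero, zero_add,
      Real.sqrt_mul zero_le_two]
    have := Real.sqrt_pos.2 ht
    have := Real.sqrt_pos.2 (show (0:ℝ) < 1 + 2 * t by positivity)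
    field_simp
    ring
  · have h2x : 0 < 2 - x := by linarith [hx.2]
    have hxt : 0 < x + 2 * t := by linarith [hx.1]
    have hu := Real.sqrt_pos.2 h2x
    have hv := Real.sqrt_pos.2 hxt
    have hnum := (((hasDerivAt_id x).const_sub 2).sqrt h2x.ne').neg
    have hden := (((hasDerivAt_id x).add_const (2 * t)).sqrt hxt.ne').const_mul (2 * (1 + t))
    refine (hnum.div hden (by simp only [id]; positivity)).congr_deriv ?_
    simp only [id, Pi.neg_apply]
    field_simp
    rw [Real.sq_sqrt h2x.le, Real.sq_sqrt hxt.le]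
    ring

theorem integral_section_Delta1 {t p : ℝ} (ht : 0 < t) (hp : p ∈ Ioo 0 1) :
    ∫ x in {x | (x, p) ∈ Delta1}, xFactorDeriv t x * (pFactor p)⁻¹ = innerIntegral t p := by
  have hx0 := lowerEnd_pos hp.1
  have hx1 := lowerEnd_lt_one hp.2
  rw [setOf_mem_Delta1 hp.1, integral_Ico_eq_integral_Ioo, integral_mul_const,
    integral_Ioo_eq_sub_of_hasDerivAt hx1.le
      ((continuousOn_xFactor ht).mono (Icc_subset_Icc_left hx0.le))
      (fun x hx => hasDerivAt_xFactor ht.le (hx0.trans hx.1) hx.2)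
      ((integrableOn_xFactorDeriv ht).mono_set (Ioo_subset_Ioo_left hx0.le)),
    ← neg_xFactor_lowerEnd_div_pFactor ht.le hp.1 hp.2]
  simp [xFactor, div_eq_mul_inv]

/-- For `t > 0`, `∫_{Δ₁} ∂F₁/∂x dx dp = ∫₀¹ dx/(2(x+2t)^{3/2}(2−x)^{1/2})` where
`F₁(x,p) = −x^{1/2}(1−x)^{1/2}/(4(x+2t)^{3/2}p^{3/4}(1−p)^{1/2})`. -/
theorem stmt13 (t : ℝ) (ht : 0 < t) :
    (∫ z in Delta1, deriv (fun x : ℝ =>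
        -(x ^ ((1:ℝ)/2) * (1 - x) ^ ((1:ℝ)/2)) /
          (4 * (x + 2 * t) ^ ((3:ℝ)/2) * z.2 ^ ((3:ℝ)/4) * (1 - z.2) ^ ((1:ℝ)/2))) z.1)
    = ∫ x in Set.Ioo (0:ℝ) 1, 1 / (2 * (x + 2 * t) ^ ((3:ℝ)/2) * (2 - x) ^ ((1:ℝ)/2)) := by
  have hderiv : ∀ z ∈ Delta1, deriv (fun x : ℝ =>
      -(x ^ ((1:ℝ)/2) * (1 - x) ^ ((1:ℝ)/2)) /
        (4 * (x + 2 * t) ^ ((3:ℝ)/2) * z.2 ^ ((3:ℝ)/4) * (1 - z.2) ^ ((1:ℝ)/2))) z.1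
      = xFactorDeriv t z.1 * (pFactor z.2)⁻¹ := by
    rintro ⟨x, p⟩ ⟨hx0, hx1, -, -⟩
    simp_rw [F₁_eq_xFactor_div_pFactor, div_eq_mul_inv (xFactor t _)]
    exact ((hasDerivAt_xFactor ht.le hx0 hx1).mul_const _).deriv
  have hint : IntegrableOn (fun z : ℝ × ℝ => xFactorDeriv t z.1 * (pFactor z.2)⁻¹) Delta1
      (volume.prod volume) :=
    ((integrableOn_xFactorDeriv ht).mul_prod integrableOn_inv_pFactor).mono_set Delta1_subset
  have hout : ∀ p ∉ Ioo (0:ℝ) 1,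
      ∫ x in {x | (x, p) ∈ Delta1}, xFactorDeriv t x * (pFactor p)⁻¹ = 0 := fun p hp => by
    rw [eq_empty_of_forall_notMem (s := {x : ℝ | (x, p) ∈ Delta1})
      fun x hx => hp (Delta1_subset hx).2, Measure.restrict_empty, integral_zero_measure]
  rw [setIntegral_congr_fun measurableSet_Delta1 hderiv, Measure.volume_eq_prod,
    setIntegral_prod_eq_integral_setIntegral_section measurableSet_Delta1 hint,
    ← setIntegral_eq_integral_of_forall_compl_eq_zero hout,
    setIntegral_congr_fun measurableSet_Ioo fun p hp => integral_section_Delta1 ht hp,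
    integral_innerIntegral ht, integral_rhs ht]
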